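/- arXiv:2012.05450 — 3 statements merged into one kernel-verified Lean document; each statement's English description precedes it below -/
import Mathlib

section
/- Let X_1,...,X_n be independent random variables and f a function of n variables satisfying the bounded differences property with constants c_1,...,c_n. Then for any ε > 0, P(f(X_1,...,X_n) - E[f(X_1,...,X_n)] ≤ ε) ≥ 1 - exp(-2ε² / Σ_{i=1}^n c_i²). -/
/-!
Peel off one coordinate at a time. Write `x = (y, z)` with `y` the first coordinate and let
`g z = ∫ f (y, z) dy`. Then `f x - E f = (f (y, z) - g z) + (g z - E g)`. For fixed `z` the first
summand ranges over an interval of length `c₀`, so Hoeffding's lemma makes it sub-Gaussian with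
parameter `c₀² / 4` in `y`; the function `g` again has bounded differences, so by induction the
second summand is sub-Gaussian with parameter `∑_{i > 0} cᵢ² / 4`, and Fubini adds the parameters.
Independence identifies the joint law with the product of the marginals, and the Chernoff bound
for parameter `∑ cᵢ² / 4` is exactly `exp (-2 ε² / ∑ cᵢ²)`.
-/

open MeasureTheory ProbabilityTheory Real
open scoped NNReal

section BoundedDifferences

variable {ι : Type*} [DecidableEq ι] {χ : ι → Type*}

def BoundedDifferences (f : (∀ i, χ i) → ℝ) (c : ι → ℝ) : Prop :=
  ∀ i x y, |f x - f (Function.update x i y)| ≤ c i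

variable {f : (∀ i, χ i) → ℝ} {c : ι → ℝ}

theorem BoundedDifferences.abs_sub_le_sum (hf : BoundedDifferences f c) (s : Finset ι) :
    ∀ x y, (∀ i ∉ s, x i = y i) → |f x - f y| ≤ ∑ i ∈ s, c i := by
  induction s using Finset.induction_on with
  | empty =>
    intro x y hxy
    simp [funext fun i => hxy i (Finset.notMem_empty i)]
  | insert a s ha ih =>
    intro x y hxy
    have hrest : |f (Function.update x a (y a)) - f y| ≤ ∑ i ∈ s, c i := by
      refine ih _ _ fun i hi => ?_
      rcases eq_or_ne i a with rfl | hia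
      · simp
      · rw [Function.update_of_ne hia]
        exact hxy i (by simp [hia, hi])
    rw [Finset.sum_insert ha]
    exact (abs_sub_le _ _ _).trans (add_le_add (hf a x (y a)) hrest)

theorem BoundedDifferences.exists_abs_le [Fintype ι] (hf : BoundedDifferences f c) :
    ∃ C, ∀ x, |f x| ≤ C := by
  rcases isEmpty_or_nonempty (∀ i, χ i) with h | ⟨⟨x₀⟩⟩
  · exact ⟨0, fun x => h.elim x⟩
  · refine ⟨|f x₀| + ∑ i, c i, fun x => ?_⟩
    have := hf.abs_sub_le_sum Finset.univ x x₀ (by simp)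
    have := abs_sub_abs_le_abs_sub (f x) (f x₀)
    linarith

theorem BoundedDifferences.integral {α : Type*} [MeasurableSpace α] {μ : Measure α}
    [IsProbabilityMeasure μ] {F : α → (∀ i, χ i) → ℝ} (hF : ∀ y, BoundedDifferences (F y) c)
    (hint : ∀ x, Integrable (fun y => F y x) μ) :
    BoundedDifferences (fun x => ∫ y, F y x ∂μ) c := by
  intro i x z
  rw [← integral_sub (hint _) (hint _), ← Real.norm_eq_abs]
  calc ‖∫ y, F y x - F y (Function.update x i z) ∂μ‖ ≤ c i * μ.real Set.univ :=
        norm_integral_le_of_norm_le_const (ae_of_all _ fun y => hF y i x z)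
    _ = c i := by simp

end BoundedDifferences

theorem BoundedDifferences.insertNth {n : ℕ} {χ : Fin (n + 1) → Type*} {f : (∀ i, χ i) → ℝ}
    {c : Fin (n + 1) → ℝ} (hf : BoundedDifferences f c) (k : Fin (n + 1)) (y : χ k) :
    BoundedDifferences (fun z => f (Fin.insertNth k y z)) (fun j => c (k.succAbove j)) := by
  intro j z w
  simpa only [Fin.insertNth_update] using hf (k.succAbove j) (Fin.insertNth k y z) w

namespace ProbabilityTheory

variable {α β : Type*} [MeasurableSpace α] [MeasurableSpace β]

theorem hasSubgaussianMGF_sub_integral_of_abs_sub_le {μ : Measure α} [IsProbabilityMeasure μ]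
    {g : α → ℝ} (hg : AEMeasurable g μ) {c : ℝ} (h : ∀ x y, |g x - g y| ≤ c) :
    HasSubgaussianMGF (fun x => g x - μ[g]) ((‖c‖₊ / 2) ^ 2) μ := by
  have := nonempty_of_isProbabilityMeasure μ
  obtain ⟨x₀⟩ := ‹Nonempty α›
  have hbdd : BddBelow (Set.range g) :=
    ⟨g x₀ - c, Set.forall_mem_range.2 fun y => by linarith [(abs_le.1 (h x₀ y)).2]⟩
  have hIcc : ∀ x, g x ∈ Set.Icc (⨅ y, g y) ((⨅ y, g y) + c) := fun x => by
    have hlow : g x - c ≤ ⨅ y, g y := le_ciInf fun y => by linarith [(abs_le.1 (h x y)).2]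
    exact ⟨ciInf_le hbdd x, by linarith⟩
  simpa using hasSubgaussianMGF_of_mem_Icc hg (ae_of_all μ hIcc)

theorem HasSubgaussianMGF.prod_add {μ : Measure α} {ν : Measure β} [SFinite μ] [SFinite ν]
    {U : α × β → ℝ} {V : β → ℝ} {a b : ℝ≥0} (hUm : Measurable U)
    (hU : ∀ z, HasSubgaussianMGF (fun y => U (y, z)) a μ) (hV : HasSubgaussianMGF V b ν) :
    HasSubgaussianMGF (fun p => U p + V p.2) (a + b) (μ.prod ν) := by
  have hsection : ∀ t z, ∫ y, exp (t * (U (y, z) + V z)) ∂μ =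
      mgf (fun y => U (y, z)) μ t * exp (t * V z) := by
    intro t z
    simp only [mul_add, exp_add, integral_mul_const, mgf]
  have hmeas : ∀ t,
      AEStronglyMeasurable (fun z => mgf (fun y => U (y, z)) μ t * exp (t * V z)) ν := by
    intro t
    have : StronglyMeasurable fun z => ∫ y, exp (t * U (y, z)) ∂μ :=
      (hUm.const_mul t).exp.stronglyMeasurable.integral_prod_left'
    exact this.aestronglyMeasurable.mul (hV.aemeasurable.const_mul t).exp.aestronglyMeasurable
  have hbound : ∀ t z,
      mgf (fun y => U (y, z)) μ t * exp (t * V z) ≤ exp (a * t ^ 2 / 2) * exp (t * V z) :=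
    fun t z => mul_le_mul_of_nonneg_right ((hU z).mgf_le t) (exp_nonneg _)
  have hint : ∀ t, Integrable (fun z => mgf (fun y => U (y, z)) μ t * exp (t * V z)) ν := fun t =>
    ((hV.integrable_exp_mul t).const_mul _).mono' (hmeas t) (ae_of_all _ fun z => by
      rw [Real.norm_of_nonneg (mul_nonneg mgf_nonneg (exp_nonneg _))]
      exact hbound t z)
  have hprod : ∀ t, Integrable (fun p => exp (t * (U p + V p.2))) (μ.prod ν) := by
    intro t
    have hm : AEStronglyMeasurable (fun p => exp (t * (U p + V p.2))) (μ.prod ν) :=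
      ((hUm.aemeasurable.add hV.aemeasurable.comp_snd).const_mul t).exp.aestronglyMeasurable
    refine (integrable_prod_iff' hm).2 ⟨ae_of_all _ fun z => ?_, ?_⟩
    · simpa only [mul_add, exp_add] using ((hU z).integrable_exp_mul t).mul_const _
    · simpa only [Real.norm_of_nonneg (exp_nonneg _), hsection] using hint t
  refine ⟨hprod, fun t => ?_⟩
  calc mgf (fun p => U p + V p.2) (μ.prod ν) t
      = ∫ z, mgf (fun y => U (y, z)) μ t * exp (t * V z) ∂ν := by
        rw [mgf, integral_prod_symm _ (hprod t)]
        simp only [hsection]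
    _ ≤ ∫ z, exp (a * t ^ 2 / 2) * exp (t * V z) ∂ν :=
        integral_mono (hint t) ((hV.integrable_exp_mul t).const_mul _) (hbound t)
    _ = exp (a * t ^ 2 / 2) * mgf V ν t := integral_const_mul _ _
    _ ≤ exp (a * t ^ 2 / 2) * exp (b * t ^ 2 / 2) := by gcongr; exact hV.mgf_le t
    _ = exp ((a + b : ℝ≥0) * t ^ 2 / 2) := by rw [← exp_add]; push_cast; ring_nf

theorem HasSubgaussianMGF.one_sub_exp_le_measureReal_le {μ : Measure α} [IsProbabilityMeasure μ]
    {X : α → ℝ} {c : ℝ≥0} (h : HasSubgaussianMGF X c μ) {ε : ℝ} (hε : 0 ≤ ε) :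
    1 - exp (-ε ^ 2 / (2 * c)) ≤ μ.real {ω | X ω ≤ ε} := by
  have hcover : μ.real Set.univ ≤ μ.real {ω | X ω ≤ ε} + μ.real {ω | X ω ≤ ε}ᶜ := by
    rw [← Set.union_compl_self {ω | X ω ≤ ε}]
    exact measureReal_union_le _ _
  have htail : μ.real {ω | X ω ≤ ε}ᶜ ≤ μ.real {ω | ε ≤ X ω} :=
    measureReal_mono fun ω (hω : ¬X ω ≤ ε) => (not_le.1 hω).le
  linarith [h.measure_ge_le hε, probReal_univ (μ := μ)]

end ProbabilityTheory

theorem hasSubgaussianMGF_pi_of_boundedDifferences {n : ℕ} {χ : Fin n → Type*}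
    [∀ i, MeasurableSpace (χ i)] (ν : ∀ i, Measure (χ i)) [∀ i, IsProbabilityMeasure (ν i)]
    {f : (∀ i, χ i) → ℝ} (hf : Measurable f) {c : Fin n → ℝ} (hbdd : BoundedDifferences f c) :
    HasSubgaussianMGF (fun x => f x - ∫ y, f y ∂Measure.pi ν)
      (∑ i, (‖c i‖₊ / 2) ^ 2) (Measure.pi ν) := by
  induction n with
  | zero =>
    have hconst : ∀ x y : ∀ i, χ i, f x = f y := fun x y => congrArg f (Subsingleton.elim x y)
    simp [hconst _ default]
  | succ n ih =>
    let e := MeasurableEquiv.piFinSuccAbove χ 0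
    let ν' := fun j => ν (Fin.succAbove 0 j)
    have hmp : MeasurePreserving e (Measure.pi ν) ((ν 0).prod (Measure.pi ν')) :=
      measurePreserving_piFinSuccAbove ν 0
    let F : χ 0 × (∀ j, χ (Fin.succAbove 0 j)) → ℝ := fun p => f (Fin.insertNth 0 p.1 p.2)
    have hF : Measurable F := hf.comp e.symm.measurable
    have hFe : ∀ x, F (e x) = f x := fun x => congrArg f (e.symm_apply_apply x)
    obtain ⟨C, hC⟩ := hbdd.exists_abs_le
    have hFint : Integrable F ((ν 0).prod (Measure.pi ν')) :=
      .of_bound hF.aestronglyMeasurable C (ae_of_all _ fun p => hC _)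
    have hFint_left : ∀ z, Integrable (fun y => F (y, z)) (ν 0) := fun z =>
      .of_bound (hF.comp measurable_prodMk_right).aestronglyMeasurable C (ae_of_all _ fun y => hC _)
    let g := fun z => ∫ y, F (y, z) ∂ν 0
    have hg : Measurable g := hF.stronglyMeasurable.integral_prod_left'.measurable
    have hgbdd : BoundedDifferences g fun j => c (Fin.succAbove 0 j) :=
      BoundedDifferences.integral (fun y => hbdd.insertNth 0 y) hFint_left
    have hmean : ∫ x, f x ∂Measure.pi ν = ∫ z, g z ∂Measure.pi ν' := by
      rw [← integral_prod_symm F hFint, ← hmp.integral_comp e.measurableEmbedding]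
      simp only [hFe]
    have hU : ∀ z, HasSubgaussianMGF (fun y => F (y, z) - g z) ((‖c 0‖₊ / 2) ^ 2) (ν 0) :=
      fun z => hasSubgaussianMGF_sub_integral_of_abs_sub_le
        (hF.comp measurable_prodMk_right).aemeasurable fun y y' => by
          simpa [F] using hbdd 0 (Fin.insertNth 0 y z) y'
    have hprod := HasSubgaussianMGF.prod_add (hF.sub (hg.comp measurable_snd)) hU (ih ν' hg hgbdd)
    rw [← hmp.map_eq] at hprod
    convert hprod.of_map e.measurable.aemeasurable using 1
    · funext x
      simp only [Function.comp_apply, Pi.sub_apply, hFe, hmean]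
      ring
    · rw [Fin.sum_univ_succAbove _ 0]

theorem mcdiarmid_one_sided_general
    {Ω : Type*} [MeasurableSpace Ω] (P : Measure Ω) [IsProbabilityMeasure P]
    (n : ℕ) (χ : Fin n → Type*) [∀ i, MeasurableSpace (χ i)]
    (X : ∀ i, Ω → χ i) (hXmeas : ∀ i, Measurable (X i))
    (hindep : iIndepFun X P)
    (f : (∀ i, χ i) → ℝ) (hfmeas : Measurable f)
    (c : Fin n → ℝ)
    (hbdd : ∀ (i : Fin n) (x : ∀ i, χ i) (y : χ i),
      |f x - f (Function.update x i y)| ≤ c i)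
    (ε : ℝ) (hε : 0 < ε) :
    1 - Real.exp (-2 * ε ^ 2 / ∑ i : Fin n, c i ^ 2) ≤
      (P {w : Ω | f (fun i => X i w) - ∫ v, f (fun i => X i v) ∂P ≤ ε}).toReal := by
  have hΦ : Measurable fun ω i => X i ω := measurable_pi_lambda _ hXmeas
  have hlaw : P.map (fun ω i => X i ω) = Measure.pi fun i => P.map (X i) :=
    (iIndepFun_iff_map_fun_eq_pi_map fun i => (hXmeas i).aemeasurable).1 hindep
  have : ∀ i, IsProbabilityMeasure (P.map (X i)) := fun i =>
    Measure.isProbabilityMeasure_map (hXmeas i).aemeasurable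
  have hsub := hasSubgaussianMGF_pi_of_boundedDifferences (fun i => P.map (X i)) hfmeas hbdd
  rw [← hlaw, integral_map hΦ.aemeasurable hfmeas.aestronglyMeasurable] at hsub
  have hparam : (2 * ((∑ i, (‖c i‖₊ / 2) ^ 2 : ℝ≥0) : ℝ)) = (∑ i, c i ^ 2) / 2 := by
    push_cast
    simp only [Real.norm_eq_abs, sq_abs, div_pow, ← Finset.sum_div]
    ring
  calc 1 - exp (-2 * ε ^ 2 / ∑ i, c i ^ 2)
      = 1 - exp (-ε ^ 2 / (2 * ((∑ i, (‖c i‖₊ / 2) ^ 2 : ℝ≥0) : ℝ))) := by rw [hparam]; ring_nf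
    _ ≤ _ := (hsub.of_map hΦ.aemeasurable).one_sub_exp_le_measureReal_le hε.le

/-- One-sided McDiarmid inequality: if `X_1,…,X_n` are independent and `f` satisfies the
bounded differences property with constants `c_i`, then for any `ε > 0`,
`P(f(X) - E[f(X)] ≤ ε) ≥ 1 - exp(-2ε²/∑ c_i²)`. -/
theorem mcdiarmid_one_sided
    {Ω : Type*} [MeasurableSpace Ω] (P : Measure Ω) [IsProbabilityMeasure P]
    (n : ℕ) (χ : Fin n → Type*) [∀ i, MeasurableSpace (χ i)]
    (X : ∀ i, Ω → χ i) (hXmeas : ∀ i, Measurable (X i))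
    (hindep : iIndepFun X P)
    (f : (∀ i, χ i) → ℝ) (hfmeas : Measurable f)
    (c : Fin n → ℝ)
    (hbdd : ∀ (i : Fin n) (x : ∀ i, χ i) (y : χ i),
      |f x - f (Function.update x i y)| ≤ c i)
    (hint : Integrable (fun w => f (fun i => X i w)) P)
    (ε : ℝ) (hε : 0 < ε) :
    1 - Real.exp (-2 * ε ^ 2 / ∑ i : Fin n, c i ^ 2) ≤
      (P {w : Ω | f (fun i => X i w) - ∫ v, f (fun i => X i v) ∂P ≤ ε}).toReal :=
  mcdiarmid_one_sided_general P n χ X hXmeas hindep f hfmeas c hbdd ε hε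
end

section
/- Let B be an n×m real matrix with m ≤ n such that A = B'B is invertible, let C be the least-squares solution of B·C = P and Ĉ the least-squares solution of B·Ĉ = P + ΔP, where P, ΔP ∈ ℝⁿ and P is in the column space of B with P = B·C. Then ‖C - Ĉ‖² / ‖C‖² ≤ κ₂(A) · ‖ΔP‖² / ‖P‖², where κ₂(A) = λ_max(A)/λ_min(A) is the 2-norm condition number of A. -/
/-!
Write `z = Ĉ - C = A⁻¹ B'ΔP`. The normal equations `B'(Bz) = B'ΔP` make `Bz` the orthogonal
projection of `ΔP` onto the column space of `B`, so by the Rayleigh bound for `A = B'B`,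
`λ_min ‖z‖² ≤ z'Az = ‖Bz‖² ≤ ‖ΔP‖²`. In the other direction `‖P‖² = C'AC ≤ λ_max ‖C‖²`, and
dividing the two estimates gives the bound with `κ₂(A) = λ_max / λ_min`.
-/

open Matrix

namespace Matrix

section DotProductSelf

variable {R n : Type*} [Fintype n] [Ring R] [LinearOrder R] [IsStrictOrderedRing R]

lemma dotProduct_self_nonneg (v : n → R) : 0 ≤ v ⬝ᵥ v :=
  Finset.sum_nonneg fun i _ => mul_self_nonneg (v i)

lemma dotProduct_self_pos {v : n → R} (hv : v ≠ 0) : 0 < v ⬝ᵥ v :=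
  (dotProduct_self_nonneg v).lt_of_ne (Ne.symm (dotProduct_self_eq_zero.not.mpr hv))

end DotProductSelf

lemma dotProduct_mul_diagonal_mul_transpose_mulVec {n : Type*} [Fintype n] [DecidableEq n]
    (U : Matrix n n ℝ) (d x : n → ℝ) :
    x ⬝ᵥ ((U * diagonal d * Uᵀ) *ᵥ x) = ∑ i, d i * (Uᵀ *ᵥ x) i ^ 2 := by
  rw [← mulVec_mulVec, ← mulVec_mulVec, dotProduct_mulVec, ← mulVec_transpose, dotProduct]
  exact Finset.sum_congr rfl fun i _ => by rw [mulVec_diagonal]; ring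

namespace IsHermitian

variable {n : Type*} [Fintype n] [DecidableEq n] {A : Matrix n n ℝ} (hA : A.IsHermitian)

lemma transpose_eigenvectorUnitary_mulVec_dotProduct_self (x : n → ℝ) :
    ((hA.eigenvectorUnitary : Matrix n n ℝ)ᵀ *ᵥ x) ⬝ᵥ
      ((hA.eigenvectorUnitary : Matrix n n ℝ)ᵀ *ᵥ x) = x ⬝ᵥ x := by
  have hU : (hA.eigenvectorUnitary : Matrix n n ℝ) *
      (hA.eigenvectorUnitary : Matrix n n ℝ)ᵀ = 1 := by
    simpa [star_eq_conjTranspose] using Unitary.mul_star_self_of_mem hA.eigenvectorUnitary.2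
  rw [dotProduct_mulVec, vecMul_transpose, mulVec_mulVec, hU, one_mulVec]

lemma dotProduct_mulVec_eq_sum_eigenvalues (x : n → ℝ) :
    x ⬝ᵥ (A *ᵥ x) =
      ∑ i, hA.eigenvalues i * ((hA.eigenvectorUnitary : Matrix n n ℝ)ᵀ *ᵥ x) i ^ 2 := by
  have hA' : A = (hA.eigenvectorUnitary : Matrix n n ℝ) * diagonal hA.eigenvalues *
      (hA.eigenvectorUnitary : Matrix n n ℝ)ᵀ := by
    simpa [Unitary.conjStarAlgAut_apply, star_eq_conjTranspose] using hA.spectral_theorem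
  rw [← dotProduct_mul_diagonal_mul_transpose_mulVec, ← hA']

lemma iInf_eigenvalues_mul_dotProduct_self_le (x : n → ℝ) :
    (⨅ i, hA.eigenvalues i) * (x ⬝ᵥ x) ≤ x ⬝ᵥ (A *ᵥ x) := by
  rw [hA.dotProduct_mulVec_eq_sum_eigenvalues,
    ← hA.transpose_eigenvectorUnitary_mulVec_dotProduct_self, dotProduct, Finset.mul_sum]
  refine Finset.sum_le_sum fun i _ => ?_
  rw [← sq]
  exact mul_le_mul_of_nonneg_right (ciInf_le (Set.finite_range _).bddBelow i) (sq_nonneg _)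

lemma dotProduct_mulVec_le_iSup_eigenvalues_mul_dotProduct_self (x : n → ℝ) :
    x ⬝ᵥ (A *ᵥ x) ≤ (⨆ i, hA.eigenvalues i) * (x ⬝ᵥ x) := by
  rw [hA.dotProduct_mulVec_eq_sum_eigenvalues,
    ← hA.transpose_eigenvectorUnitary_mulVec_dotProduct_self, dotProduct, Finset.mul_sum]
  refine Finset.sum_le_sum fun i _ => ?_
  rw [← sq]
  exact mul_le_mul_of_nonneg_right (le_ciSup (Set.finite_range _).bddAbove i) (sq_nonneg _)

end IsHermitian

lemma PosDef.iInf_eigenvalues_pos {n : Type*} [Fintype n] [DecidableEq n] [Nonempty n]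
    {A : Matrix n n ℝ} (hA : A.PosDef) : 0 < ⨅ i, hA.1.eigenvalues i := by
  obtain ⟨i, hi⟩ := exists_eq_ciInf_of_finite (f := hA.1.eigenvalues)
  exact (hA.eigenvalues_pos i).trans_eq hi

section LeastSquares

variable {m n : Type*} [Fintype m] [Fintype n] (B : Matrix n m ℝ)

lemma dotProduct_transpose_mul_self_mulVec (x : m → ℝ) :
    x ⬝ᵥ ((Bᵀ * B) *ᵥ x) = (B *ᵥ x) ⬝ᵥ (B *ᵥ x) := by
  rw [← mulVec_mulVec, dotProduct_mulVec, vecMul_transpose, dotProduct_comm]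

lemma mulVec_dotProduct_self_le_of_transpose_mulVec_eq {z : m → ℝ} {e : n → ℝ}
    (h : Bᵀ *ᵥ (B *ᵥ z) = Bᵀ *ᵥ e) : (B *ᵥ z) ⬝ᵥ (B *ᵥ z) ≤ e ⬝ᵥ e := by
  set r := e - B *ᵥ z
  -- Pythagoras for `e = Bz + r` with `r` orthogonal to the column space of `B`
  have horth : (B *ᵥ z) ⬝ᵥ r = 0 := by
    rw [← vecMul_transpose, ← dotProduct_mulVec, mulVec_sub, h, sub_self, dotProduct_zero]
  have hr := dotProduct_self_nonneg r
  have he : e = B *ᵥ z + r := by simp [r]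
  rw [he, add_dotProduct, dotProduct_add, dotProduct_add, dotProduct_comm r, horth]
  linarith

variable [DecidableEq m]

lemma posDef_transpose_mul_self_of_isUnit (hB : IsUnit (Bᵀ * B)) : (Bᵀ * B).PosDef := by
  have hinj : Function.Injective (Bᵀ.mulVec ∘ B.mulVec) := by
    simpa [Function.comp_def, mulVec_mulVec] using mulVec_injective_iff_isUnit.mpr hB
  simpa using PosDef.conjTranspose_mul_self B hinj.of_comp

noncomputable def leastSquares (y : n → ℝ) : m → ℝ := (Bᵀ * B)⁻¹ *ᵥ (Bᵀ *ᵥ y)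

variable {B}

lemma transpose_mulVec_mulVec_leastSquares (hB : IsUnit (Bᵀ * B)) (y : n → ℝ) :
    Bᵀ *ᵥ (B *ᵥ leastSquares B y) = Bᵀ *ᵥ y := by
  rw [leastSquares, mulVec_mulVec, mulVec_mulVec,
    mul_nonsing_inv _ ((isUnit_iff_isUnit_det _).mp hB), one_mulVec]

lemma leastSquares_mulVec_add (hB : IsUnit (Bᵀ * B)) (c : m → ℝ) (e : n → ℝ) :
    leastSquares B (B *ᵥ c + e) = c + leastSquares B e := by
  rw [leastSquares, leastSquares, mulVec_add, mulVec_add, mulVec_mulVec c Bᵀ, mulVec_mulVec,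
    nonsing_inv_mul _ ((isUnit_iff_isUnit_det _).mp hB), one_mulVec]

lemma iInf_eigenvalues_mul_leastSquares_dotProduct_self_le (hB : IsUnit (Bᵀ * B))
    (hH : (Bᵀ * B).IsHermitian) (e : n → ℝ) :
    (⨅ i, hH.eigenvalues i) * (leastSquares B e ⬝ᵥ leastSquares B e) ≤ e ⬝ᵥ e :=
  calc (⨅ i, hH.eigenvalues i) * (leastSquares B e ⬝ᵥ leastSquares B e)
      ≤ leastSquares B e ⬝ᵥ ((Bᵀ * B) *ᵥ leastSquares B e) :=
        hH.iInf_eigenvalues_mul_dotProduct_self_le _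
    _ = (B *ᵥ leastSquares B e) ⬝ᵥ (B *ᵥ leastSquares B e) :=
        dotProduct_transpose_mul_self_mulVec B _
    _ ≤ e ⬝ᵥ e :=
        mulVec_dotProduct_self_le_of_transpose_mulVec_eq B
          (transpose_mulVec_mulVec_leastSquares hB e)

end LeastSquares

end Matrix

theorem least_squares_perturbation_general (n m : ℕ)
    (B : Matrix (Fin n) (Fin m) ℝ)
    (A : Matrix (Fin m) (Fin m) ℝ) (hA : A = Bᵀ * B) (hAinv : IsUnit A)
    (hHerm : A.IsHermitian)
    (C : Fin m → ℝ) (P ΔP : Fin n → ℝ) (hP : P = B *ᵥ C)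
    (Chat : Fin m → ℝ) (hChat : Chat = A⁻¹ *ᵥ (Bᵀ *ᵥ (P + ΔP)))
    (κ : ℝ) (hκ : κ = (⨆ i : Fin m, hHerm.eigenvalues i) / (⨅ i : Fin m, hHerm.eigenvalues i)) :
    (∑ i : Fin m, (C i - Chat i) ^ 2) / (∑ i : Fin m, (C i) ^ 2) ≤
      κ * (∑ j : Fin n, (ΔP j) ^ 2) / (∑ j : Fin n, (P j) ^ 2) := by
  subst hA hP hChat hκ
  set lmin := ⨅ i, hHerm.eigenvalues i
  set lmax := ⨆ i, hHerm.eigenvalues i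
  set z := leastSquares B ΔP
  have hdiff : C - leastSquares B (B *ᵥ C + ΔP) = -z := by
    rw [leastSquares_mulVec_add hAinv]; abel
  simp only [sq]
  change (C - leastSquares B _) ⬝ᵥ (C - leastSquares B _) / (C ⬝ᵥ C) ≤
    lmax / lmin * (ΔP ⬝ᵥ ΔP) / ((B *ᵥ C) ⬝ᵥ (B *ᵥ C))
  rw [hdiff, neg_dotProduct, dotProduct_neg, neg_neg, ← dotProduct_transpose_mul_self_mulVec]
  rcases eq_or_ne C 0 with rfl | hC
  · -- both sides are `0 / 0 = 0`
    simp
  have : Nonempty (Fin m) := ⟨(Function.ne_iff.mp hC).choose⟩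
  have hlmin : 0 < lmin := (posDef_transpose_mul_self_of_isUnit B hAinv).iInf_eigenvalues_pos
  have hlmax : 0 < lmax :=
    hlmin.trans_le (ciInf_le_ciSup (Set.finite_range _).bddBelow (Set.finite_range _).bddAbove)
  have herr : lmin * (z ⬝ᵥ z) ≤ ΔP ⬝ᵥ ΔP :=
    iInf_eigenvalues_mul_leastSquares_dotProduct_self_le hAinv hHerm ΔP
  have hsignal := hHerm.dotProduct_mulVec_le_iSup_eigenvalues_mul_dotProduct_self C
  have hsignal_pos : 0 < C ⬝ᵥ ((Bᵀ * B) *ᵥ C) :=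
    (mul_pos hlmin (dotProduct_self_pos hC)).trans_le
      (hHerm.iInf_eigenvalues_mul_dotProduct_self_le C)
  calc z ⬝ᵥ z / (C ⬝ᵥ C) ≤ (ΔP ⬝ᵥ ΔP / lmin) / (C ⬝ᵥ ((Bᵀ * B) *ᵥ C) / lmax) :=
        div_le_div₀ (div_nonneg (dotProduct_self_nonneg _) hlmin.le)
          ((le_div_iff₀' hlmin).mpr herr) (by positivity) ((div_le_iff₀' hlmax).mpr hsignal)
    _ = lmax / lmin * (ΔP ⬝ᵥ ΔP) / (C ⬝ᵥ ((Bᵀ * B) *ᵥ C)) := by field_simp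

/-- Perturbation bound for least-squares solutions: if `A = B'B` is invertible,
`P = B·C` and `Ĉ = A⁻¹ B'(P + ΔP)` is the least-squares solution of the perturbed system,
then `‖C - Ĉ‖²/‖C‖² ≤ κ₂(A) ‖ΔP‖²/‖P‖²`, where `κ₂(A) = λ_max(A)/λ_min(A)`. -/
theorem least_squares_perturbation (n m : ℕ) (hm0 : 0 < m) (hmn : m ≤ n)
    (B : Matrix (Fin n) (Fin m) ℝ)
    (A : Matrix (Fin m) (Fin m) ℝ) (hA : A = Bᵀ * B) (hAinv : IsUnit A)
    (hHerm : A.IsHermitian)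
    (C : Fin m → ℝ) (P ΔP : Fin n → ℝ) (hP : P = B *ᵥ C)
    (Chat : Fin m → ℝ) (hChat : Chat = A⁻¹ *ᵥ (Bᵀ *ᵥ (P + ΔP)))
    (κ : ℝ) (hκ : κ = (⨆ i : Fin m, hHerm.eigenvalues i) / (⨅ i : Fin m, hHerm.eigenvalues i)) :
    (∑ i : Fin m, (C i - Chat i) ^ 2) / (∑ i : Fin m, (C i) ^ 2) ≤
      κ * (∑ j : Fin n, (ΔP j) ^ 2) / (∑ j : Fin n, (P j) ^ 2) :=
  least_squares_perturbation_general n m B A hA hAinv hHerm C P ΔP hP Chat hChat κ hκ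
end

section
/- Let X_1,...,X_n be i.i.d. Beta(α+1,β+1) on I=[-1,1], independent of i.i.d. centered noises ε_1,...,ε_n with variance σ². Let g_N = f - π_N f be orthogonal (in L²_ω) to J̃_0,...,J̃_N, and define the vector v ∈ ℝ^{N+1} with components v_k = (1/n) Σ_{j=1}^n J̃_{k-1}(X_j)(g_N(X_j) + ε_j). Then E[‖v‖²] = (N+1)σ²/(n γ) + (1/n²) Σ_{k=1}^{N+1} E[Σ_{j=1}^n J̃_{k-1}(X_j)² g_N(X_j)²], where γ = 2^{α+β+1} B(α+1,β+1); in particular E[‖v‖²] ≤ (N+1)σ²/(nγ) + (m²(N+1)^{2μ+2}/(nγ)) ‖g_N‖_ω², provided Σ_{k=0}^N J̃_k(x)² ≤ m²(N+1)^{2μ+2} for all x ∈ I. -/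
open MeasureTheory Set ProbabilityTheory

/-- The Jacobi weight `ω(x) = (1-x)^α (1+x)^β`. -/
noncomputable def jacobiWeight (α β x : ℝ) : ℝ := (1 - x) ^ α * (1 + x) ^ β

/-- `γ = 2^{α+β+1} B(α+1,β+1)`. -/
noncomputable def betaGamma (α β : ℝ) : ℝ :=
  (2 : ℝ) ^ (α + β + 1) * (Real.Gamma (α + 1) * Real.Gamma (β + 1) / Real.Gamma (α + β + 2))

/-- The `Beta(α+1, β+1)` distribution on `[-1,1]`, with density `ω(x)/γ`. -/
noncomputable def betaMeasure (α β : ℝ) : Measure ℝ :=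
  volume.withDensity (fun x => ENNReal.ofReal
    ((Icc (-1 : ℝ) 1).indicator (fun y => jacobiWeight α β y / betaGamma α β) x))

/-! Each coordinate `v_k` is `n⁻¹ Σ_j Z_{kj}` with `Z_{kj} = J̃_k(X_j) (g_N(X_j) + ε_j)`. The
summands are independent in `j` and centred: `E[J̃_k(X) g_N(X)] = 0` is the orthogonality of
`g_N` to `J̃_k` read through the law of `X`, and `E[J̃_k(X) ε] = E[J̃_k(X)] E[ε] = 0`. So
`E[v_k²] = n⁻² Σ_j E[Z_{kj}²]`, and in `E[Z²]` the cross term `2 E[J̃_k(X)² g_N(X) ε]` vanishes for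
the same reason, while `E[J̃_k(X)² ε²] = σ² E[J̃_k(X)²] = σ²/γ` by normalisation. The bound then
comes from integrating `Σ_k J̃_k² ≤ m²(N+1)^{2μ+2}` against `g_N² ω`. -/

lemma integrableOn_sq_mul_of_abs_le {X : Type*} [MeasurableSpace X] {μ : Measure X} {s : Set X}
    (hs : MeasurableSet s) {g h : X → ℝ} {M : ℝ} (hh : IntegrableOn h s μ) (hg : Measurable g)
    (hgM : ∀ x ∈ s, |g x| ≤ M) : IntegrableOn (fun x => g x ^ 2 * h x) s μ :=
  Integrable.bdd_mul (c := M ^ 2) hh (hg.pow_const 2).aestronglyMeasurable <|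
    ae_restrict_of_forall_mem hs fun x hx => by
      rw [Real.norm_eq_abs, abs_pow]
      exact pow_le_pow_left₀ (abs_nonneg _) (hgM x hx) 2

lemma sum_setIntegral_sq_mul_sq_mul_le {X : Type*} [MeasurableSpace X] {μ : Measure X} {s : Set X}
    (hs : MeasurableSet s) {ι : Type*} (t : Finset ι) {f : ι → X → ℝ} {g w : X → ℝ} {C : ℝ}
    (hfg : ∀ i ∈ t, IntegrableOn (fun x => f i x ^ 2 * g x ^ 2 * w x) s μ)
    (hg : IntegrableOn (fun x => g x ^ 2 * w x) s μ) (hw : ∀ x ∈ s, 0 ≤ w x)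
    (hC : ∀ x ∈ s, ∑ i ∈ t, f i x ^ 2 ≤ C) :
    ∑ i ∈ t, ∫ x in s, f i x ^ 2 * g x ^ 2 * w x ∂μ ≤ C * ∫ x in s, g x ^ 2 * w x ∂μ := by
  rw [← integral_finsetSum t hfg, ← integral_const_mul]
  refine setIntegral_mono_on (integrable_finsetSum t hfg) (hg.const_mul C) hs fun x hx => ?_
  simp_rw [mul_assoc, ← Finset.sum_mul]
  exact mul_le_mul_of_nonneg_right (hC x hx) (mul_nonneg (sq_nonneg _) (hw x hx))

section SecondMoments

variable {Ω : Type*} [MeasurableSpace Ω] {P : Measure Ω}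

lemma memLp_two_mul_of_indepFun {U V : Ω → ℝ} (hUV : IndepFun U V P) (hU : MemLp U 2 P)
    (hV : MemLp V 2 P) : MemLp (fun w => U w * V w) 2 P := by
  refine (memLp_two_iff_integrable_sq (f := fun w => U w * V w) (hU.1.mul hV.1)).2 ?_
  have hUV2 : IndepFun (fun w => U w ^ 2) (fun w => V w ^ 2) P :=
    hUV.comp (measurable_id.pow_const 2) (measurable_id.pow_const 2)
  simp only [mul_pow]
  exact hUV2.integrable_mul hU.integrable_sq hV.integrable_sq

lemma integral_sum_sq_of_pairwise_indepFun [IsFiniteMeasure P] {ι : Type*} (s : Finset ι)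
    {Z : ι → Ω → ℝ} (hZ : ∀ i ∈ s, MemLp (Z i) 2 P) (hZ0 : ∀ i ∈ s, ∫ w, Z i w ∂P = 0)
    (hind : (s : Set ι).Pairwise fun i j => IndepFun (Z i) (Z j) P) :
    ∫ w, (∑ i ∈ s, Z i w) ^ 2 ∂P = ∑ i ∈ s, ∫ w, Z i w ^ 2 ∂P := by
  have hsum : (fun w => ∑ i ∈ s, Z i w) = ∑ i ∈ s, Z i := by
    ext w
    simp only [Finset.sum_apply]
  have hsum0 : ∫ w, ∑ i ∈ s, Z i w ∂P = 0 := by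
    rw [integral_finsetSum s fun i hi => (hZ i hi).integrable one_le_two]
    exact Finset.sum_eq_zero hZ0
  rw [← variance_of_integral_eq_zero (memLp_finsetSum s hZ).1.aemeasurable hsum0, hsum,
    IndepFun.variance_sum hZ hind]
  exact Finset.sum_congr rfl fun i hi =>
    variance_of_integral_eq_zero (hZ i hi).1.aemeasurable (hZ0 i hi)

variable {E : Type*} [MeasurableSpace E] {a b : E → ℝ}

section OneTerm

variable {Y : Ω → E} {e : Ω → ℝ}

lemma memLp_two_mul_add_of_indepFun (hYe : IndepFun Y e P) (ha : Measurable a)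
    (haY : MemLp (fun w => a (Y w)) 2 P) (habY : MemLp (fun w => a (Y w) * b (Y w)) 2 P)
    (he : MemLp e 2 P) : MemLp (fun w => a (Y w) * (b (Y w) + e w)) 2 P := by
  simp_rw [mul_add]
  exact habY.add (memLp_two_mul_of_indepFun (hYe.comp ha measurable_id) haY he)

lemma integral_mul_add_of_indepFun (hYe : IndepFun Y e P) (ha : Measurable a)
    (haY : MemLp (fun w => a (Y w)) 2 P) (habY : MemLp (fun w => a (Y w) * b (Y w)) 2 P)
    (he : MemLp e 2 P) (he0 : ∫ w, e w ∂P = 0) [IsFiniteMeasure P] :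
    ∫ w, a (Y w) * (b (Y w) + e w) ∂P = ∫ w, a (Y w) * b (Y w) ∂P := by
  have haYe : IndepFun (fun w => a (Y w)) e P := hYe.comp ha measurable_id
  simp_rw [mul_add]
  rw [integral_add (habY.integrable one_le_two)
    ((memLp_two_mul_of_indepFun haYe haY he).integrable one_le_two),
    haYe.integral_fun_mul_eq_mul_integral haY.1 he.1, he0, mul_zero, add_zero]

lemma integral_mul_add_sq_of_indepFun (hYe : IndepFun Y e P) (ha : Measurable a)
    (hb : Measurable b) (haY : MemLp (fun w => a (Y w)) 2 P)
    (habY : MemLp (fun w => a (Y w) * b (Y w)) 2 P) (he : MemLp e 2 P)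
    (he0 : ∫ w, e w ∂P = 0) :
    ∫ w, (a (Y w) * (b (Y w) + e w)) ^ 2 ∂P =
      ∫ w, (a (Y w) * b (Y w)) ^ 2 ∂P + (∫ w, a (Y w) ^ 2 ∂P) * ∫ w, e w ^ 2 ∂P := by
  have haeY : MemLp (fun w => a (Y w) * e w) 2 P :=
    memLp_two_mul_of_indepFun (hYe.comp ha measurable_id) haY he
  have hcross : ∫ w, (a (Y w) * b (Y w)) * (a (Y w) * e w) ∂P = 0 := by
    have hind : IndepFun (fun w => a (Y w) * b (Y w) * a (Y w)) e P :=
      hYe.comp ((ha.mul hb).mul ha) measurable_id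
    calc ∫ w, (a (Y w) * b (Y w)) * (a (Y w) * e w) ∂P
        = ∫ w, a (Y w) * b (Y w) * a (Y w) * e w ∂P := by simp only [mul_assoc]
      _ = 0 := by
        rw [hind.integral_fun_mul_eq_mul_integral (habY.1.mul haY.1) he.1, he0, mul_zero]
  have hnoise : ∫ w, (a (Y w) * e w) ^ 2 ∂P = (∫ w, a (Y w) ^ 2 ∂P) * ∫ w, e w ^ 2 ∂P := by
    have hind : IndepFun (fun w => a (Y w) ^ 2) (fun w => e w ^ 2) P :=
      hYe.comp (ha.pow_const 2) (measurable_id.pow_const 2)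
    simp_rw [mul_pow]
    exact hind.integral_fun_mul_eq_mul_integral (haY.1.pow 2) (he.1.pow 2)
  have hexpand : (fun w => (a (Y w) * (b (Y w) + e w)) ^ 2) = fun w => (a (Y w) * b (Y w)) ^ 2
      + (2 * ((a (Y w) * b (Y w)) * (a (Y w) * e w)) + (a (Y w) * e w) ^ 2) := by
    ext w
    ring
  have hprod : Integrable (fun w => (a (Y w) * b (Y w)) * (a (Y w) * e w)) P :=
    habY.integrable_mul haeY
  rw [hexpand, integral_add, integral_add, integral_const_mul, hcross, hnoise]
  · ring
  · exact hprod.const_mul 2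
  · exact haeY.integrable_sq
  · exact habY.integrable_sq
  · exact (hprod.const_mul 2).add haeY.integrable_sq

end OneTerm

lemma integral_sum_mul_add_sq_of_iIndepFun {ι : Type*} [Fintype ι] {Y : ι → Ω → E}
    {e : ι → Ω → ℝ} (hind : iIndepFun (fun i w => (Y i w, e i w)) P)
    (hYe : ∀ i, IndepFun (Y i) (e i) P) (ha : Measurable a) (hb : Measurable b)
    (haY : ∀ i, MemLp (fun w => a (Y i w)) 2 P)
    (habY : ∀ i, MemLp (fun w => a (Y i w) * b (Y i w)) 2 P)
    (hab0 : ∀ i, ∫ w, a (Y i w) * b (Y i w) ∂P = 0) (he : ∀ i, MemLp (e i) 2 P)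
    (he0 : ∀ i, ∫ w, e i w ∂P = 0) [IsFiniteMeasure P] :
    ∫ w, (∑ i, a (Y i w) * (b (Y i w) + e i w)) ^ 2 ∂P =
      ∑ i, (∫ w, (a (Y i w) * b (Y i w)) ^ 2 ∂P + (∫ w, a (Y i w) ^ 2 ∂P) * ∫ w, e i w ^ 2 ∂P) := by
  have hZ : Measurable fun q : E × ℝ => a q.1 * (b q.1 + q.2) := by fun_prop
  rw [integral_sum_sq_of_pairwise_indepFun Finset.univ
    (Z := fun i w => a (Y i w) * (b (Y i w) + e i w))
    (fun i _ => memLp_two_mul_add_of_indepFun (hYe i) ha (haY i) (habY i) (he i))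
    (fun i _ => (integral_mul_add_of_indepFun (hYe i) ha (haY i) (habY i) (he i) (he0 i)).trans
      (hab0 i))
    (fun i _ j _ hij => (hind.indepFun hij).comp hZ hZ)]
  exact Finset.sum_congr rfl fun i _ =>
    integral_mul_add_sq_of_indepFun (hYe i) ha hb (haY i) (habY i) (he i) (he0 i)

end SecondMoments

section JacobiWeight

@[fun_prop]
lemma measurable_jacobiWeight (α β : ℝ) : Measurable (jacobiWeight α β) := by
  unfold jacobiWeight
  fun_prop

lemma jacobiWeight_nonneg (α β : ℝ) {x : ℝ} (hx : x ∈ Icc (-1 : ℝ) 1) :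
    0 ≤ jacobiWeight α β x :=
  mul_nonneg (Real.rpow_nonneg (by linarith [hx.2]) _) (Real.rpow_nonneg (by linarith [hx.1]) _)

lemma betaGamma_pos {α β : ℝ} (hα : -1 < α) (hβ : -1 < β) : 0 < betaGamma α β := by
  have := Real.Gamma_pos_of_pos (show 0 < α + 1 by linarith)
  have := Real.Gamma_pos_of_pos (show 0 < β + 1 by linarith)
  have := Real.Gamma_pos_of_pos (show 0 < α + β + 2 by linarith)
  unfold betaGamma
  positivity

lemma betaMeasure_eq_withDensity (α β : ℝ) :
    _root_.betaMeasure α β = (volume.restrict (Icc (-1 : ℝ) 1)).withDensity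
      fun x => ENNReal.ofReal (jacobiWeight α β x / betaGamma α β) := by
  rw [← withDensity_indicator measurableSet_Icc, _root_.betaMeasure]
  congr 1
  funext x
  exact congrFun (Set.indicator_comp_of_zero ENNReal.ofReal_zero).symm x

variable {α β : ℝ}

lemma integral_betaMeasure (hγ : 0 ≤ betaGamma α β) (φ : ℝ → ℝ) :
    ∫ x, φ x ∂_root_.betaMeasure α β =
      (∫ x in Icc (-1 : ℝ) 1, φ x * jacobiWeight α β x) / betaGamma α β := by
  rw [betaMeasure_eq_withDensity α β, integral_withDensity_eq_integral_toReal_smul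
    (by fun_prop) (ae_of_all _ fun _ => ENNReal.ofReal_lt_top), ← integral_div]
  refine setIntegral_congr_fun measurableSet_Icc fun x hx => ?_
  rw [ENNReal.toReal_ofReal (div_nonneg (jacobiWeight_nonneg α β hx) hγ), smul_eq_mul]
  ring

lemma integrable_betaMeasure_iff (hγ : 0 < betaGamma α β) {φ : ℝ → ℝ} :
    Integrable φ (_root_.betaMeasure α β) ↔
      IntegrableOn (fun x => φ x * jacobiWeight α β x) (Icc (-1 : ℝ) 1) := by
  rw [betaMeasure_eq_withDensity α β, integrable_withDensity_iff (by fun_prop)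
    (ae_of_all _ fun _ => ENNReal.ofReal_lt_top), IntegrableOn,
    ← integrable_mul_const_iff (isUnit_iff_ne_zero.2 (inv_ne_zero hγ.ne'))
      (fun x => φ x * jacobiWeight α β x)]
  refine integrable_congr (ae_restrict_of_forall_mem measurableSet_Icc fun x hx => ?_)
  dsimp only
  rw [ENNReal.toReal_ofReal (div_nonneg (jacobiWeight_nonneg α β hx) hγ.le)]
  ring

lemma integrableOn_jacobiWeight (hγ : 0 < betaGamma α β)
    [IsFiniteMeasure (_root_.betaMeasure α β)] :
    IntegrableOn (jacobiWeight α β) (Icc (-1 : ℝ) 1) := by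
  simpa using (integrable_betaMeasure_iff hγ).1 (integrable_const (1 : ℝ))

lemma integrableOn_sq_mul_sq_mul_jacobiWeight {p g : ℝ → ℝ} {M : ℝ}
    (hpnorm : ∫ x in Icc (-1 : ℝ) 1, p x ^ 2 * jacobiWeight α β x = 1) (hg : Measurable g)
    (hgM : ∀ x ∈ Icc (-1 : ℝ) 1, |g x| ≤ M) :
    IntegrableOn (fun x => p x ^ 2 * g x ^ 2 * jacobiWeight α β x) (Icc (-1 : ℝ) 1) :=
  (integrableOn_sq_mul_of_abs_le measurableSet_Icc
    (Integrable.of_integral_ne_zero (by rw [hpnorm]; exact one_ne_zero)) hg hgM).congr_fun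
    (fun x _ => by ring) measurableSet_Icc

end JacobiWeight

section BetaLaw

variable {α β : ℝ} {Ω : Type*} [MeasurableSpace Ω] {P : Measure Ω}

lemma integral_comp_of_map_eq_betaMeasure {Y : Ω → ℝ} (hγ : 0 ≤ betaGamma α β)
    (hY : AEMeasurable Y P) (hlaw : P.map Y = _root_.betaMeasure α β) {φ : ℝ → ℝ}
    (hφ : Measurable φ) :
    ∫ w, φ (Y w) ∂P = (∫ x in Icc (-1 : ℝ) 1, φ x * jacobiWeight α β x) / betaGamma α β := by
  rw [← integral_map hY hφ.aestronglyMeasurable, hlaw, integral_betaMeasure hγ]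

lemma integrable_comp_iff_of_map_eq_betaMeasure {Y : Ω → ℝ} (hγ : 0 < betaGamma α β)
    (hY : AEMeasurable Y P) (hlaw : P.map Y = _root_.betaMeasure α β) {φ : ℝ → ℝ}
    (hφ : Measurable φ) :
    Integrable (fun w => φ (Y w)) P ↔
      IntegrableOn (fun x => φ x * jacobiWeight α β x) (Icc (-1 : ℝ) 1) := by
  rw [← integrable_betaMeasure_iff hγ, ← hlaw, integrable_map_measure hφ.aestronglyMeasurable hY]
  rfl

lemma memLp_comp_of_map_eq_betaMeasure {Y : Ω → ℝ} (hγ : 0 < betaGamma α β)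
    (hY : AEMeasurable Y P) (hlaw : P.map Y = _root_.betaMeasure α β) {φ : ℝ → ℝ}
    (hφ : Measurable φ)
    (hφ2 : IntegrableOn (fun x => φ x ^ 2 * jacobiWeight α β x) (Icc (-1 : ℝ) 1)) :
    MemLp (fun w => φ (Y w)) 2 P :=
  (memLp_two_iff_integrable_sq (hφ.comp_aemeasurable hY).aestronglyMeasurable).2 <|
    (integrable_comp_iff_of_map_eq_betaMeasure hγ hY hlaw (hφ.pow_const 2)).2 hφ2

lemma integral_sum_comp_of_map_eq_betaMeasure {ι : Type*} [Fintype ι] {X : ι → Ω → ℝ}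
    (hγ : 0 < betaGamma α β) (hX : ∀ i, AEMeasurable (X i) P)
    (hlaw : ∀ i, P.map (X i) = _root_.betaMeasure α β) {φ : ℝ → ℝ} (hφ : Measurable φ)
    (hφω : IntegrableOn (fun x => φ x * jacobiWeight α β x) (Icc (-1 : ℝ) 1)) :
    ∫ w, ∑ i, φ (X i w) ∂P =
      Fintype.card ι * (∫ x in Icc (-1 : ℝ) 1, φ x * jacobiWeight α β x) / betaGamma α β := by
  rw [integral_finsetSum _ fun i _ =>
    (integrable_comp_iff_of_map_eq_betaMeasure hγ (hX i) (hlaw i) hφ).2 hφω]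
  simp_rw [integral_comp_of_map_eq_betaMeasure hγ.le (hX _) (hlaw _) hφ]
  rw [Finset.sum_const, Finset.card_univ, nsmul_eq_mul, mul_div_assoc]

variable {p g : ℝ → ℝ} {M : ℝ}

lemma memLp_comp_of_integral_sq_mul_jacobiWeight_eq_one {Y : Ω → ℝ} (hγ : 0 < betaGamma α β)
    (hY : AEMeasurable Y P) (hlaw : P.map Y = _root_.betaMeasure α β) (hp : Measurable p)
    (hpnorm : ∫ x in Icc (-1 : ℝ) 1, p x ^ 2 * jacobiWeight α β x = 1) :
    MemLp (fun w => p (Y w)) 2 P :=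
  memLp_comp_of_map_eq_betaMeasure hγ hY hlaw hp
    (Integrable.of_integral_ne_zero (by rw [hpnorm]; exact one_ne_zero))

lemma memLp_mul_comp_of_abs_le {Y : Ω → ℝ} (hγ : 0 < betaGamma α β) (hY : AEMeasurable Y P)
    (hlaw : P.map Y = _root_.betaMeasure α β) (hp : Measurable p) (hg : Measurable g)
    (hpnorm : ∫ x in Icc (-1 : ℝ) 1, p x ^ 2 * jacobiWeight α β x = 1)
    (hgM : ∀ x ∈ Icc (-1 : ℝ) 1, |g x| ≤ M) :
    MemLp (fun w => p (Y w) * g (Y w)) 2 P :=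
  memLp_comp_of_map_eq_betaMeasure (φ := fun x => p x * g x) hγ hY hlaw (hp.mul hg) <|
    (integrableOn_sq_mul_sq_mul_jacobiWeight hpnorm hg hgM).congr_fun
      (fun x _ => by ring) measurableSet_Icc

variable {ι : Type*} [Fintype ι] {X e : ι → Ω → ℝ}

lemma memLp_sum_mul_add_of_map_eq_betaMeasure (hγ : 0 < betaGamma α β)
    (hX : ∀ i, AEMeasurable (X i) P) (hlaw : ∀ i, P.map (X i) = _root_.betaMeasure α β)
    (hXe : ∀ i, IndepFun (X i) (e i) P) (he : ∀ i, MemLp (e i) 2 P)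
    (hp : Measurable p) (hg : Measurable g)
    (hpnorm : ∫ x in Icc (-1 : ℝ) 1, p x ^ 2 * jacobiWeight α β x = 1)
    (hgM : ∀ x ∈ Icc (-1 : ℝ) 1, |g x| ≤ M) :
    MemLp (fun w => ∑ i, p (X i w) * (g (X i w) + e i w)) 2 P :=
  memLp_finsetSum _ fun i _ => memLp_two_mul_add_of_indepFun (hXe i) hp
    (memLp_comp_of_integral_sq_mul_jacobiWeight_eq_one hγ (hX i) (hlaw i) hp hpnorm)
    (memLp_mul_comp_of_abs_le hγ (hX i) (hlaw i) hp hg hpnorm hgM) (he i)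

lemma integral_sq_sum_mul_add_of_map_eq_betaMeasure (hγ : 0 < betaGamma α β)
    (hX : ∀ i, AEMeasurable (X i) P) (hlaw : ∀ i, P.map (X i) = _root_.betaMeasure α β)
    (hind : iIndepFun (fun i w => (X i w, e i w)) P) (hXe : ∀ i, IndepFun (X i) (e i) P)
    (he : ∀ i, MemLp (e i) 2 P) (he0 : ∀ i, ∫ w, e i w ∂P = 0) {σ : ℝ}
    (hevar : ∀ i, ∫ w, e i w ^ 2 ∂P = σ ^ 2) (hp : Measurable p) (hg : Measurable g)
    (hpnorm : ∫ x in Icc (-1 : ℝ) 1, p x ^ 2 * jacobiWeight α β x = 1)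
    (hgM : ∀ x ∈ Icc (-1 : ℝ) 1, |g x| ≤ M)
    (horth : ∫ x in Icc (-1 : ℝ) 1, p x * g x * jacobiWeight α β x = 0) [IsFiniteMeasure P] :
    ∫ w, (∑ i, p (X i w) * (g (X i w) + e i w)) ^ 2 ∂P =
      Fintype.card ι * σ ^ 2 / betaGamma α β + ∫ w, ∑ i, p (X i w) ^ 2 * g (X i w) ^ 2 ∂P := by
  have hpgX i := memLp_mul_comp_of_abs_le hγ (hX i) (hlaw i) hp hg hpnorm hgM
  have hcomp {φ : ℝ → ℝ} (hφ : Measurable φ) (i : ι) :=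
    integral_comp_of_map_eq_betaMeasure hγ.le (hX i) (hlaw i) hφ
  rw [integral_sum_mul_add_sq_of_iIndepFun hind hXe hp hg
    (fun i => memLp_comp_of_integral_sq_mul_jacobiWeight_eq_one hγ (hX i) (hlaw i) hp hpnorm) hpgX
    (fun i => by rw [hcomp (φ := fun x => p x * g x) (hp.mul hg) i, horth, zero_div]) he he0,
    Finset.sum_add_distrib, ← integral_finsetSum _ fun i _ => (hpgX i).integrable_sq]
  simp_rw [mul_pow, hevar, hcomp (φ := fun x => p x ^ 2) (by fun_prop), hpnorm]
  rw [Finset.sum_const, Finset.card_univ, nsmul_eq_mul]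
  ring

lemma sum_integral_sum_sq_mul_sq_le_of_map_eq_betaMeasure {κ : Type*} (t : Finset κ)
    {q : κ → ℝ → ℝ} {C : ℝ} (hγ : 0 < betaGamma α β) (hX : ∀ i, AEMeasurable (X i) P)
    (hlaw : ∀ i, P.map (X i) = _root_.betaMeasure α β) (hq : ∀ k, Measurable (q k))
    (hg : Measurable g)
    (hqg : ∀ k ∈ t,
      IntegrableOn (fun x => q k x ^ 2 * g x ^ 2 * jacobiWeight α β x) (Icc (-1 : ℝ) 1))
    (hg2 : IntegrableOn (fun x => g x ^ 2 * jacobiWeight α β x) (Icc (-1 : ℝ) 1))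
    (hC : ∀ x ∈ Icc (-1 : ℝ) 1, ∑ k ∈ t, q k x ^ 2 ≤ C) :
    ∑ k ∈ t, ∫ w, ∑ i, q k (X i w) ^ 2 * g (X i w) ^ 2 ∂P ≤
      Fintype.card ι * (C * ∫ x in Icc (-1 : ℝ) 1, g x ^ 2 * jacobiWeight α β x) /
        betaGamma α β := by
  rw [Finset.sum_congr rfl fun k hk => integral_sum_comp_of_map_eq_betaMeasure hγ hX hlaw
    (φ := fun x => q k x ^ 2 * g x ^ 2) (by fun_prop) (hqg k hk), ← Finset.sum_div,
    ← Finset.mul_sum]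
  gcongr
  exact sum_setIntegral_sq_mul_sq_mul_le measurableSet_Icc t hqg hg2
    (fun x hx => jacobiWeight_nonneg α β hx) hC

end BetaLaw

theorem expected_norm_sq_residual_vector_general
    (α β : ℝ) (hα : -(1/2 : ℝ) ≤ α) (hβ : -(1/2 : ℝ) ≤ β)
    (μ : ℝ)
    (n N : ℕ) (hn : 0 < n)
    {Ω : Type*} [MeasurableSpace Ω] (P : Measure Ω) [IsProbabilityMeasure P]
    (X : Fin n → Ω → ℝ) (hXmeas : ∀ j, Measurable (X j))
    (hlaw : ∀ j, Measure.map (X j) P = _root_.betaMeasure α β)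
    (ε : Fin n → Ω → ℝ)
    (hεL2 : ∀ j, MemLp (ε j) 2 P)
    (σ : ℝ)
    (hε0 : ∀ j, ∫ w, ε j w ∂P = 0) (hεvar : ∀ j, ∫ w, (ε j w) ^ 2 ∂P = σ ^ 2)
    (hindep : iIndepFun (fun j => fun w => (X j w, ε j w)) P)
    (hXε : ∀ j, IndepFun (X j) (ε j) P)
    (J : ℕ → ℝ → ℝ) (hJmeas : ∀ k, Measurable (J k))
    (hJnorm : ∀ k ≤ N, ∫ x in Icc (-1 : ℝ) 1, (J k x) ^ 2 * jacobiWeight α β x = 1)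
    (g : ℝ → ℝ) (hgmeas : Measurable g)
    (Mg : ℝ) (hgbdd : ∀ x ∈ Icc (-1 : ℝ) 1, |g x| ≤ Mg)
    (horth : ∀ k ≤ N, ∫ x in Icc (-1 : ℝ) 1, J k x * g x * jacobiWeight α β x = 0)
    (v : Fin (N + 1) → Ω → ℝ)
    (hv : ∀ k w, v k w = (1 / (n : ℝ)) * ∑ j : Fin n, J (k : ℕ) (X j w) * (g (X j w) + ε j w)) :
    (∫ w, ∑ k : Fin (N + 1), (v k w) ^ 2 ∂P) =
        ((N : ℝ) + 1) * σ ^ 2 / (n * betaGamma α β) +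
          (1 / (n : ℝ) ^ 2) * ∑ k : Fin (N + 1),
            ∫ w, ∑ j : Fin n, (J (k : ℕ) (X j w)) ^ 2 * (g (X j w)) ^ 2 ∂P ∧
      ∀ m : ℝ, (∀ x ∈ Icc (-1 : ℝ) 1,
          ∑ k ∈ Finset.range (N + 1), (J k x) ^ 2 ≤ m ^ 2 * ((N : ℝ) + 1) ^ (2 * μ + 2)) →
        (∫ w, ∑ k : Fin (N + 1), (v k w) ^ 2 ∂P) ≤
          ((N : ℝ) + 1) * σ ^ 2 / (n * betaGamma α β) +
            m ^ 2 * ((N : ℝ) + 1) ^ (2 * μ + 2) / (n * betaGamma α β) *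
              ∫ x in Icc (-1 : ℝ) 1, (g x) ^ 2 * jacobiWeight α β x := by
  have hγ : 0 < betaGamma α β := betaGamma_pos (by linarith) (by linarith)
  have hX (j : Fin n) : AEMeasurable (X j) P := (hXmeas j).aemeasurable
  have : IsProbabilityMeasure (_root_.betaMeasure α β) :=
    hlaw ⟨0, hn⟩ ▸ Measure.isProbabilityMeasure_map (hX _)
  refine (fun heq => ⟨heq, fun m hm => heq ▸ ?bound⟩) ?identity
  case identity =>
    simp_rw [hv, mul_pow]
    rw [integral_finsetSum _ fun (k : Fin (N + 1)) _ =>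
      ((memLp_sum_mul_add_of_map_eq_betaMeasure hγ hX hlaw hXε hεL2 (hJmeas k) hgmeas
        (hJnorm k k.is_le) hgbdd).integrable_sq.const_mul _)]
    simp_rw [integral_const_mul]
    rw [Finset.sum_congr rfl fun (k : Fin (N + 1)) _ => congrArg _
      (integral_sq_sum_mul_add_of_map_eq_betaMeasure hγ hX hlaw hindep hXε hεL2 hε0 hεvar
        (hJmeas k) hgmeas (hJnorm k k.is_le) hgbdd (horth k k.is_le)),
      ← Finset.mul_sum, Finset.sum_add_distrib, Finset.sum_const, Finset.card_univ,
      Fintype.card_fin, Fintype.card_fin, nsmul_eq_mul]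
    field_simp [hγ.ne']
    push_cast
    ring
  case bound =>
    have hbound := sum_integral_sum_sq_mul_sq_le_of_map_eq_betaMeasure (Finset.range (N + 1))
      hγ hX hlaw hJmeas hgmeas (fun k hk => integrableOn_sq_mul_sq_mul_jacobiWeight
        (hJnorm k (Nat.lt_succ_iff.1 (Finset.mem_range.1 hk))) hgmeas hgbdd)
      (integrableOn_sq_mul_of_abs_le measurableSet_Icc (integrableOn_jacobiWeight hγ) hgmeas
        hgbdd) hm
    rw [← Fin.sum_univ_eq_sum_range (fun k => ∫ w, ∑ j, J k (X j w) ^ 2 * g (X j w) ^ 2 ∂P),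
      Fintype.card_fin] at hbound
    have hn2 : (0 : ℝ) ≤ 1 / (n : ℝ) ^ 2 := by positivity
    refine (add_le_add_iff_left _).2 ((mul_le_mul_of_nonneg_left hbound hn2).trans_eq ?_)
    field_simp

/-- Second moment identity and bound for `v_k = (1/n) ∑_j J̃_{k}(X_j)(g_N(X_j) + ε_j)`, where
the `X_j` are i.i.d. `Beta(α+1,β+1)`, the `ε_j` are i.i.d. centered noises with variance `σ²`
independent of the `X_j`, and `g_N = f - π_N f` is `L²_ω`-orthogonal to `J̃_0,…,J̃_N`:
`E[‖v‖²] = (N+1)σ²/(nγ) + (1/n²) ∑_k E[∑_j J̃_k(X_j)² g_N(X_j)²]`, and if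
`∑_{k=0}^N J̃_k(x)² ≤ m²(N+1)^{2μ+2}` on `[-1,1]` then
`E[‖v‖²] ≤ (N+1)σ²/(nγ) + (m²(N+1)^{2μ+2}/(nγ))‖g_N‖_ω²`. -/
theorem expected_norm_sq_residual_vector
    (α β : ℝ) (hα : -(1/2 : ℝ) ≤ α) (hβ : -(1/2 : ℝ) ≤ β)
    (μ : ℝ) (hμ : μ = max α β)
    (n N : ℕ) (hn : 0 < n)
    {Ω : Type*} [MeasurableSpace Ω] (P : Measure Ω) [IsProbabilityMeasure P]
    (X : Fin n → Ω → ℝ) (hXmeas : ∀ j, Measurable (X j))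
    (hlaw : ∀ j, Measure.map (X j) P = _root_.betaMeasure α β)
    (ε : Fin n → Ω → ℝ) (hεmeas : ∀ j, Measurable (ε j))
    (hεL2 : ∀ j, MemLp (ε j) 2 P)
    (σ : ℝ) (hσ : 0 ≤ σ)
    (hε0 : ∀ j, ∫ w, ε j w ∂P = 0) (hεvar : ∀ j, ∫ w, (ε j w) ^ 2 ∂P = σ ^ 2)
    (hindep : iIndepFun (fun j => fun w => (X j w, ε j w)) P)
    (hXε : ∀ j, IndepFun (X j) (ε j) P)
    (J : ℕ → ℝ → ℝ) (hJmeas : ∀ k, Measurable (J k))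
    (hJnorm : ∀ k ≤ N, ∫ x in Icc (-1 : ℝ) 1, (J k x) ^ 2 * jacobiWeight α β x = 1)
    (g : ℝ → ℝ) (hgmeas : Measurable g)
    (Mg : ℝ) (hgbdd : ∀ x ∈ Icc (-1 : ℝ) 1, |g x| ≤ Mg)
    (horth : ∀ k ≤ N, ∫ x in Icc (-1 : ℝ) 1, J k x * g x * jacobiWeight α β x = 0)
    (v : Fin (N + 1) → Ω → ℝ)
    (hv : ∀ k w, v k w = (1 / (n : ℝ)) * ∑ j : Fin n, J (k : ℕ) (X j w) * (g (X j w) + ε j w)) :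
    (∫ w, ∑ k : Fin (N + 1), (v k w) ^ 2 ∂P) =
        ((N : ℝ) + 1) * σ ^ 2 / (n * betaGamma α β) +
          (1 / (n : ℝ) ^ 2) * ∑ k : Fin (N + 1),
            ∫ w, ∑ j : Fin n, (J (k : ℕ) (X j w)) ^ 2 * (g (X j w)) ^ 2 ∂P ∧
      ∀ m : ℝ, (∀ x ∈ Icc (-1 : ℝ) 1,
          ∑ k ∈ Finset.range (N + 1), (J k x) ^ 2 ≤ m ^ 2 * ((N : ℝ) + 1) ^ (2 * μ + 2)) →
        (∫ w, ∑ k : Fin (N + 1), (v k w) ^ 2 ∂P) ≤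
          ((N : ℝ) + 1) * σ ^ 2 / (n * betaGamma α β) +
            m ^ 2 * ((N : ℝ) + 1) ^ (2 * μ + 2) / (n * betaGamma α β) *
              ∫ x in Icc (-1 : ℝ) 1, (g x) ^ 2 * jacobiWeight α β x :=
  expected_norm_sq_residual_vector_general α β hα hβ μ n N hn P X hXmeas hlaw ε hεL2 σ hε0 hεvar
    hindep hXε J hJmeas hJnorm g hgmeas Mg hgbdd horth v hv
end
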